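/- arXiv:2007.07121 — 13 statements merged into one kernel-verified Lean document; each statement's English description precedes it below -/
import Mathlib

section
/- If the number of distinct women who receive a proposal in some proposal vector less than or equal to I exceeds the number m of men, then no proposal vector G with G ≥ I is a stable marriage. -/
open Finset

/-- A stable marriage instance: `m` men, `w` women, complete strict preference lists.
`mpref i k` is the woman at rank `k` (rank `0` = most preferred) on man `i`'s list.
`wrank q p` is the rank of man `p` on woman `q`'s list (smaller = more preferred). -/
structure SM (m w : ℕ) where
  mpref : Fin m → (Fin w ≃ Fin w)
  wrank : Fin w → Fin m → ℕ
  wrank_inj : ∀ q : Fin w, Function.Injective (wrank q)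

namespace SM

variable {m w : ℕ} (S : SM m w)

/-- The woman that man `i` proposes to in proposal vector `G`. -/
def rho (G : Fin m → Fin w) (i : Fin m) : Fin w := S.mpref i (G i)

/-- `(p, q)` is a blocking pair for proposal vector `G`: `p` strictly prefers `q` to the
woman he proposes to in `G`, and `q` strictly prefers `p` to every man proposing to
her in `G` (vacuously true if she receives no proposal in `G`). -/
def Blocking (G : Fin m → Fin w) (p : Fin m) (q : Fin w) : Prop :=
  (S.mpref p).symm q < G p ∧ ∀ j : Fin m, S.rho G j = q → S.wrank q p < S.wrank q j

/-- `G` is a man-saturating matching: all men propose to distinct women. -/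
def Saturating (G : Fin m → Fin w) : Prop := Function.Injective (S.rho G)

/-- `G` is a stable marriage: a man-saturating matching with no blocking pair. -/
def Stable (G : Fin m → Fin w) : Prop :=
  S.Saturating G ∧ ∀ p q, ¬ S.Blocking G p q

/-- `numw G`: the number of distinct women who receive a proposal in some proposal
vector less than or equal to `G` (i.e. women whose rank on some man `i`'s list
is at most `G i`). -/
def numw (G : Fin m → Fin w) : ℕ :=
  (Finset.univ.filter fun q : Fin w => ∃ i : Fin m, (S.mpref i).symm q ≤ G i).card

/-- Man `i` is forbidden in `G`: there is another man `j` such that either both propose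
to the same woman in `G` and she prefers `j`, or `(j, ρ(G,i))` is a blocking pair in `G`. -/
def Forbidden (G : Fin m → Fin w) (i : Fin m) : Prop :=
  ∃ j : Fin m, j ≠ i ∧
    ((S.rho G j = S.rho G i ∧ S.wrank (S.rho G i) j < S.wrank (S.rho G i) i) ∨
      S.Blocking G j (S.rho G i))

/-- Man `i` is rForbidden in `G`: there is a woman `q` whom `i` strictly prefers to his
current proposal and who strictly prefers `i` to every other man who has proposed to her
in any proposal vector `≤ G`. -/
def RForbidden (G : Fin m → Fin w) (i : Fin m) : Prop :=
  ∃ q : Fin w, (S.mpref i).symm q < G i ∧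
    ∀ j : Fin m, j ≠ i → (S.mpref j).symm q ≤ G j → S.wrank q i < S.wrank q j

end SM

/-- The `L¹` (Manhattan) distance between two proposal vectors. -/
def pdist {m w : ℕ} (G H : Fin m → Fin w) : ℕ :=
  ∑ i, Nat.dist (G i : ℕ) (H i : ℕ)

/-- If more than `m` distinct women receive a proposal in some proposal vector `≤ I`,
then no proposal vector `G ≥ I` is a stable marriage. -/
theorem stmt0 {m w : ℕ} (S : SM m w) (I : Fin m → Fin w) (h : m < S.numw I) :
    ∀ G : Fin m → Fin w, I ≤ G → ¬ S.Stable G := by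
  intro G hIG hst
  have hsub : S.numw I ≤ S.numw G := by
    apply Finset.card_le_card
    intro q hq
    simp only [Finset.mem_filter, Finset.mem_univ, true_and] at hq ⊢
    obtain ⟨i, hi⟩ := hq
    exact ⟨i, hi.trans (hIG i)⟩
  have hcard : m < S.numw G := lt_of_lt_of_le h hsub
  have himg : (Finset.univ.image (S.rho G)).card ≤ m := by
    simpa using Finset.card_image_le.trans (by simp)
  -- some woman in the filter set is not in the image
  have hex : ∃ q ∈ Finset.univ.filter (fun q : Fin w => ∃ i : Fin m, (S.mpref i).symm q ≤ G i),
      q ∉ Finset.univ.image (S.rho G) := by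
    by_contra hc
    push_neg at hc
    have : S.numw G ≤ m :=
      (Finset.card_le_card hc).trans himg
    omega
  obtain ⟨q, hqmem, hqnot⟩ := hex
  simp only [Finset.mem_filter, Finset.mem_univ, true_and] at hqmem
  obtain ⟨i, hi⟩ := hqmem
  have hne : S.rho G i ≠ q := by
    intro hrho
    exact hqnot (Finset.mem_image.2 ⟨i, Finset.mem_univ i, hrho⟩)
  have hlt : (S.mpref i).symm q < G i := by
    rcases lt_or_eq_of_le hi with h' | h'
    · exact h'
    · exfalso; apply hne
      simp [SM.rho, ← h']
  exact hst.2 i q ⟨hlt, fun j hj => absurd (Finset.mem_image.2 ⟨j, Finset.mem_univ j, hj⟩) hqnot⟩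
end

section
/- Let G be a proposal vector with numw(G) ≤ m. Then there exists a man i who is forbidden in G if and only if G is not a stable marriage. -/
open Finset

/-- For a proposal vector `G` with `numw G ≤ m`, some man is forbidden in `G`
iff `G` is not a stable marriage. -/
theorem stmt1 {m w : ℕ} (S : SM m w) (G : Fin m → Fin w) (h : S.numw G ≤ m) :
    (∃ i : Fin m, S.Forbidden G i) ↔ ¬ S.Stable G := by
  constructor
  · rintro ⟨i, j, hji, hcase⟩ ⟨hsat, hnb⟩
    rcases hcase with ⟨heq, hlt⟩ | hb
    · exact hji (hsat heq)
    · exact hnb j _ hb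
  · intro hns
    by_contra hnf
    push_neg at hnf
    apply hns
    have hsat : S.Saturating G := by
      intro a b hab
      by_contra hne
      rcases lt_or_gt_of_ne ((S.wrank_inj (S.rho G a)).ne_iff.mpr hne) with hlt | hlt
      · exact hnf b ⟨a, hne, Or.inl ⟨hab, by rw [← hab]; exact hlt⟩⟩
      · exact hnf a ⟨b, Ne.symm hne, Or.inl ⟨hab.symm, hlt⟩⟩
    refine ⟨hsat, fun p q hb => ?_⟩
    have hq : ∃ i : Fin m, S.rho G i = q := by
      by_contra hnoq
      push_neg at hnoq
      have hsub : insert q (Finset.univ.image (S.rho G)) ⊆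
          Finset.univ.filter fun r : Fin w => ∃ i : Fin m, (S.mpref i).symm r ≤ G i := by
        intro r hr
        simp only [Finset.mem_insert, Finset.mem_image, Finset.mem_univ, true_and] at hr ⊢
        simp only [Finset.mem_filter, Finset.mem_univ, true_and]
        rcases hr with rfl | ⟨i, rfl⟩
        · exact ⟨p, hb.1.le⟩
        · exact ⟨i, by rw [SM.rho, Equiv.symm_apply_apply]⟩
      have hcard : m + 1 ≤ S.numw G := by
        rw [SM.numw]
        calc m + 1 = (insert q (Finset.univ.image (S.rho G))).card := by
              rw [Finset.card_insert_of_notMem (by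
                simp only [Finset.mem_image, Finset.mem_univ, true_and]
                rintro ⟨i, hi⟩; exact hnoq i hi),
                Finset.card_image_of_injective _ hsat, Finset.card_univ, Fintype.card_fin]
          _ ≤ _ := Finset.card_le_card hsub
      omega
    obtain ⟨i, hi⟩ := hq
    have hpi : p ≠ i := by
      intro hpi
      exact lt_irrefl _ (hb.2 p (by rw [hpi, hi]))
    exact hnf i ⟨p, hpi, Or.inr (by rw [hi]; exact hb)⟩
end

section
/- If man i is forbidden in proposal vector G, then there is no proposal vector H with H ≥ G and H[i] = G[i] such that H is a stable marriage. -/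
open Finset

/-- If man `i` is forbidden in `G`, then no proposal vector `H ≥ G` with `H i = G i`
is a stable marriage. -/
theorem stmt2 {m w : ℕ} (S : SM m w) (G : Fin m → Fin w) (i : Fin m)
    (hf : S.Forbidden G i) :
    ∀ H : Fin m → Fin w, G ≤ H → H i = G i → ¬ S.Stable H := by
  rintro H hGH hHi ⟨hsat, hnb⟩
  obtain ⟨j, hji, hcase⟩ := hf
  set q := S.rho G i with hq
  have hHq : S.rho H i = q := by simp [SM.rho, hHi, hq]
  have honly : ∀ k : Fin m, S.rho H k = q → k = i := by
    intro k hk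
    exact hsat (by rw [hk, hHq])
  rcases hcase with ⟨hrj, hw⟩ | ⟨hlt, hall⟩
  · -- case (a)
    have hsymm : (S.mpref j).symm q = G j := by
      rw [← hrj]; simp [SM.rho]
    rcases eq_or_lt_of_le (hGH j) with heq | hlt
    · exact hji (honly j (by simp [SM.rho, ← heq, ← hrj]))
    · apply hnb j q
      refine ⟨by rw [hsymm]; exact hlt, ?_⟩
      intro k hk
      rw [honly k hk]
      exact hw
  · -- case (b)
    apply hnb j q
    refine ⟨lt_of_lt_of_le hlt (hGH j), ?_⟩
    intro k hk
    rw [honly k hk]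
    exact hall i rfl
end

section
/- Let G be a proposal vector with numw(G) ≥ m. Then there exists a man i such that rForbidden(G,i) holds if and only if G is not a stable marriage. -/
open Finset

/-- For a proposal vector `G` with `numw G ≥ m`, some man is rForbidden in `G`
iff `G` is not a stable marriage. -/
theorem stmt4 {m w : ℕ} (S : SM m w) (G : Fin m → Fin w) (h : m ≤ S.numw G) :
    (∃ i : Fin m, S.RForbidden G i) ↔ ¬ S.Stable G := by
  constructor
  · rintro ⟨i, q, hlt, hall⟩ ⟨hsat, hst⟩
    apply hst i q
    refine ⟨hlt, ?_⟩
    intro j hj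
    have heq : (S.mpref j).symm q = G j := by
      rw [← hj]; simp [SM.rho]
    rcases eq_or_ne j i with rfl | hne
    · rw [heq] at hlt; exact absurd hlt (lt_irrefl _)
    · exact hall j hne (le_of_eq heq)
  · intro hns
    by_contra hno
    push_neg at hno
    have key : ∀ q : Fin w, (∃ i, (S.mpref i).symm q ≤ G i) →
        ∃ j, S.rho G j = q ∧ ∀ j', (S.mpref j').symm q ≤ G j' →
          S.wrank q j ≤ S.wrank q j' := by
      intro q hq
      obtain ⟨i0, hi0⟩ := hq
      obtain ⟨j, hjmem, hmin⟩ := Finset.exists_min_image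
        (Finset.univ.filter fun j => (S.mpref j).symm q ≤ G j) (S.wrank q)
        ⟨i0, by simpa using hi0⟩
      simp only [Finset.mem_filter, Finset.mem_univ, true_and] at hjmem
      have hmin' : ∀ j', (S.mpref j').symm q ≤ G j' → S.wrank q j ≤ S.wrank q j' := by
        intro j' hj'
        exact hmin j' (by simpa using hj')
      rcases lt_or_eq_of_le hjmem with hlt | heq
      · exact absurd ⟨q, hlt, fun j' hne hj' =>
          lt_of_le_of_ne (hmin' j' hj') (fun hEq => hne (S.wrank_inj q hEq).symm)⟩ (hno j)
      · exact ⟨j, by simp [SM.rho, ← heq], hmin'⟩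
    rcases Nat.eq_zero_or_pos m with hm | hm
    · subst hm
      exact hns ⟨fun a b _ => a.elim0, fun p => p.elim0⟩
    haveI : Nonempty (Fin m) := ⟨⟨0, hm⟩⟩
    choose b hb1 hb2 using key
    set B : Fin w → Fin m := fun q =>
      if hq : ∃ i, (S.mpref i).symm q ≤ G i then b q hq else Classical.arbitrary _ with hB
    have hBrho : ∀ q (hq : ∃ i, (S.mpref i).symm q ≤ G i), S.rho G (B q) = q := by
      intro q hq; simp only [hB, dif_pos hq]; exact hb1 q hq
    have hBmin : ∀ q (hq : ∃ i, (S.mpref i).symm q ≤ G i),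
        ∀ j', (S.mpref j').symm q ≤ G j' → S.wrank q (B q) ≤ S.wrank q j' := by
      intro q hq; simp only [hB, dif_pos hq]; exact hb2 q hq
    set Wf : Finset (Fin w) :=
      Finset.univ.filter fun q : Fin w => ∃ i : Fin m, (S.mpref i).symm q ≤ G i with hWf
    have hmemW : ∀ q ∈ Wf, ∃ i, (S.mpref i).symm q ≤ G i := by
      intro q hq; simpa [hWf] using hq
    have hinj : Set.InjOn B Wf := by
      intro q hq q' hq' hBB
      have h1 := hBrho q (hmemW q hq)
      have h2 := hBrho q' (hmemW q' hq')
      rw [hBB] at h1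
      rw [h1] at h2
      exact h2
    have hcardW : m ≤ Wf.card := h
    have hcard : (Wf.image B).card = m := by
      rw [Finset.card_image_of_injOn hinj]
      refine le_antisymm ?_ hcardW
      calc Wf.card = (Wf.image B).card := (Finset.card_image_of_injOn hinj).symm
        _ ≤ Fintype.card (Fin m) := Finset.card_le_univ _
        _ = m := Fintype.card_fin m
    have himg : Wf.image B = Finset.univ := Finset.eq_univ_of_card _ (by simpa using hcard)
    have hsurj : ∀ i : Fin m, ∃ q ∈ Wf, B q = i := by
      intro i
      have : i ∈ Wf.image B := himg ▸ Finset.mem_univ i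
      simpa [Finset.mem_image] using this
    apply hns
    constructor
    · intro i i' hii'
      obtain ⟨q, hqW, hBq⟩ := hsurj i
      obtain ⟨q', hqW', hBq'⟩ := hsurj i'
      have r1 : S.rho G i = q := by rw [← hBq]; exact hBrho q (hmemW q hqW)
      have r2 : S.rho G i' = q' := by rw [← hBq']; exact hBrho q' (hmemW q' hqW')
      rw [r1, r2] at hii'
      rw [← hBq, ← hBq', hii']
    · rintro p q ⟨hlt, hbl⟩
      have hq : ∃ i, (S.mpref i).symm q ≤ G i := ⟨p, le_of_lt hlt⟩
      have h1 := hBrho q hq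
      have h2 := hBmin q hq p (le_of_lt hlt)
      have h3 := hbl (B q) h1
      omega
end

section
/- Assume numw(G) ≥ m. If rForbidden(G,i) holds, then there is no stable proposal vector H with H ≤ G and H[i] = G[i]. -/
open Finset

/-- Assume `numw G ≥ m`. If man `i` is rForbidden in `G`, then no proposal vector
`H ≤ G` with `H i = G i` is a stable marriage. -/
theorem stmt5 {m w : ℕ} (S : SM m w) (G : Fin m → Fin w) (i : Fin m)
    (h : m ≤ S.numw G) (hf : S.RForbidden G i) :
    ∀ H : Fin m → Fin w, H ≤ G → H i = G i → ¬ S.Stable H := by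
  intro H hHG hHi hstable
  obtain ⟨q, hlt, hall⟩ := hf
  have hnotblock := hstable.2 i q
  have hblock1 : (S.mpref i).symm q < H i := hHi ▸ hlt
  rw [SM.Blocking, not_and] at hnotblock
  have := hnotblock hblock1
  push_neg at this
  obtain ⟨j, hjq, hle⟩ := this
  by_cases hji : j = i
  · subst hji
    have : (S.mpref j).symm q = H j := by
      have := congrArg (S.mpref j).symm hjq
      simpa [SM.rho] using this.symm
    exact absurd (this ▸ hblock1) (lt_irrefl _)
  · have hle' : (S.mpref j).symm q ≤ G j := by
      have : (S.mpref j).symm q = H j := by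
        have := congrArg (S.mpref j).symm hjq
        simpa [SM.rho] using this.symm
      exact this ▸ hHG j
    exact absurd hle (not_le.mpr (hall j hji hle'))
end

section
/- If K = max(G, U) componentwise, where U is a stable proposal vector, then for any man i, rForbidden(K, i) implies rForbidden(G, i), where rForbidden(G,i) is taken to mean that there is no stable marriage H ≤ G with H[i] = G[i]. -/
open Finset

/-- `i` is (semantically) rForbidden in `G`: there is no stable marriage `H ≤ G`
with `H i = G i`. -/
def NoStableBelowAt {m w : ℕ} (S : SM m w) (G : Fin m → Fin w) (i : Fin m) : Prop :=
  ¬ ∃ H : Fin m → Fin w, S.Stable H ∧ H ≤ G ∧ H i = G i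

/-- If `K = max(G, U)` componentwise with `U` a stable proposal vector, then for any man
`i`, rForbidden in `K` implies rForbidden in `G` (in the semantic sense). -/
theorem stmt6 {m w : ℕ} (S : SM m w) (G U K : Fin m → Fin w)
    (hU : S.Stable U) (hK : K = fun j => max (G j) (U j)) (i : Fin m)
    (h : NoStableBelowAt S K i) : NoStableBelowAt S G i := by
  rintro ⟨H, hHs, hHle, hHi⟩
  apply h
  rcases le_total (G i) (U i) with hc | hc
  · exact ⟨U, hU, fun j => by simp [hK], by simp [hK, max_eq_right hc]⟩
  · exact ⟨H, hHs, fun j => le_trans (hHle j) (by simp [hK]),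
      by simp [hK, hHi, max_eq_left hc]⟩
end

section
/- Any stable marriage matches exactly the same set of women as the man-optimal stable marriage; in particular, no stable marriage includes a woman outside the set W' of women matched in the man-optimal marriage. -/
open Finset

/-- Any stable marriage matches exactly the same set of women as the man-optimal stable
marriage `L` (the stable vector below every stable vector); in particular no stable
marriage includes a woman outside the set matched in `L`. -/
theorem stmt7 {m w : ℕ} (S : SM m w) (L : Fin m → Fin w)
    (hL : S.Stable L) (hopt : ∀ G : Fin m → Fin w, S.Stable G → L ≤ G) :
    ∀ G : Fin m → Fin w, S.Stable G → Set.range (S.rho G) = Set.range (S.rho L) := by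
  intro G hG
  have hsub : Set.range (S.rho L) ⊆ Set.range (S.rho G) := by
    rintro q ⟨i, rfl⟩
    by_contra hq
    have hle : L ≤ G := hopt G hG
    have hne : L i ≠ G i := by
      intro h
      exact hq ⟨i, by simp [SM.rho, ← h]⟩
    have hlt : L i < G i := lt_of_le_of_ne (hle i) hne
    refine hG.2 i (S.rho L i) ⟨?_, ?_⟩
    · simpa [SM.rho] using hlt
    · intro j hj
      exact absurd ⟨j, hj⟩ hq
  have h1 : (Set.range (S.rho G)).ncard = m := by
    rw [← Set.image_univ, Set.ncard_image_of_injective _ hG.1, Set.ncard_univ, Nat.card_eq_fintype_card, Fintype.card_fin]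
  have h2 : (Set.range (S.rho L)).ncard = m := by
    rw [← Set.image_univ, Set.ncard_image_of_injective _ hL.1, Set.ncard_univ, Nat.card_eq_fintype_card, Fintype.card_fin]
  exact (Set.eq_of_subset_of_ncard_le hsub (by rw [h1, h2]) (Set.finite_range _)).symm
end

section
/- If G is a man-saturating matching such that some man i prefers a woman outside the set W' of women matched in the man-optimal stable marriage to his partner ρ(G,i), then G is not stable. -/
open Finset

/-- If `G` is a man-saturating matching in which some man `i` prefers a woman `q`
outside the set of women matched in the man-optimal stable marriage `L` to his own
partner `ρ(G,i)`, then `G` is not stable. -/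
theorem stmt8 {m w : ℕ} (S : SM m w) (L : Fin m → Fin w)
    (hL : S.Stable L) (hopt : ∀ H : Fin m → Fin w, S.Stable H → L ≤ H)
    (G : Fin m → Fin w) (hsat : S.Saturating G)
    (i : Fin m) (q : Fin w) (hq : q ∉ Set.range (S.rho L))
    (hpref : (S.mpref i).symm q < G i) :
    ¬ S.Stable G := by
  intro hG
  have hLG : L ≤ G := hopt G hG
  have hsub : (Finset.univ.image (S.rho L)) ⊆ (Finset.univ.image (S.rho G)) := by
    intro q' hq'
    simp only [Finset.mem_image, Finset.mem_univ, true_and] at hq' ⊢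
    obtain ⟨p, rfl⟩ := hq'
    by_contra hq'
    push_neg at hq'
    apply hG.2 p (S.rho L p)
    refine ⟨?_, fun j hj => absurd hj (hq' j)⟩
    have hne : G p ≠ L p := by
      intro h
      exact hq' p (by rw [SM.rho, h]; rfl)
    have hsymm : (S.mpref p).symm (S.rho L p) = L p := (S.mpref p).symm_apply_apply _
    rw [hsymm]
    exact lt_of_le_of_ne (hLG p) (Ne.symm hne)
  have hcard : (Finset.univ.image (S.rho G)).card ≤ (Finset.univ.image (S.rho L)).card := by
    rw [Finset.card_image_of_injective _ hG.1, Finset.card_image_of_injective _ hL.1]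
  have heq := Finset.eq_of_subset_of_card_le hsub hcard
  apply hG.2 i q
  refine ⟨hpref, fun j hj => ?_⟩
  exfalso
  apply hq
  have : q ∈ Finset.univ.image (S.rho G) := by
    simp only [Finset.mem_image, Finset.mem_univ, true_and]
    exact ⟨j, hj⟩
  rw [← heq] at this
  simp only [Finset.mem_image, Finset.mem_univ, true_and] at this
  obtain ⟨p, hp⟩ := this
  exact ⟨p, hp⟩
end

section
/- In any stable marriage, every man is matched to one of his top m choices; i.e., if G is a stable proposal vector, then G[i] ≤ m for every man i. -/
open Finset

/-- In any stable marriage every man is matched to one of his top `m` choices: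
if `G` is a stable proposal vector then `G i < m` (0-indexed rank) for every man `i`. -/
theorem stmt9 {m w : ℕ} (hmw : m ≤ w) (S : SM m w) (G : Fin m → Fin w)
    (hG : S.Stable G) : ∀ i : Fin m, (G i : ℕ) < m := by
  intro i
  by_contra h
  push_neg at h
  -- Women within man i's top (G i + 1) choices
  set T : Finset (Fin w) := (Finset.Iic (G i)).image (S.mpref i) with hT
  -- Matched women
  set M : Finset (Fin w) := Finset.univ.image (S.rho G) with hM
  have hTcard : T.card = (G i : ℕ) + 1 := by
    rw [hT, Finset.card_image_of_injective _ (S.mpref i).injective, Fin.card_Iic]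
  have hMcard : M.card = m := by
    rw [hM, Finset.card_image_of_injective _ hG.1, Finset.card_univ, Fintype.card_fin]
  have hlt : M.card < T.card := by omega
  have hns : ¬ T ⊆ M := fun hs => absurd (Finset.card_le_card hs) (by omega)
  obtain ⟨q, hqT, hqM⟩ := Finset.not_subset.mp hns
  obtain ⟨k, hk, hkq⟩ := Finset.mem_image.mp hqT
  have hsymm : (S.mpref i).symm q = k := by rw [← hkq]; simp
  have hne : k ≠ G i := by
    intro hkGi
    apply hqM
    exact Finset.mem_image.mpr ⟨i, Finset.mem_univ i, by rw [SM.rho, ← hkGi, hkq]⟩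
  refine hG.2 i q ⟨?_, ?_⟩
  · rw [hsymm]
    exact lt_of_le_of_ne (Finset.mem_Iic.mp hk) hne
  · intro j hj
    exact absurd (Finset.mem_image.mpr ⟨j, Finset.mem_univ j, hj⟩) hqM
end

section
/- Given an initial proposal vector I, if there exists any stable marriage G' with G' ≥ I, then there exists a unique least stable marriage H ≥ I, and moreover H minimizes the L1 distance ||H - I||₁ among all stable marriages that are ≥ I. -/
open Finset

/-!
Stable proposal vectors are closed under componentwise minimum. The heart of this is a counting
argument: the men who do strictly better in `H` than in `G` propose in `H` exactly to the women
whose `G`-partners do strictly better in `H`. Hence the finitely many stable vectors above `I`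
have their infimum among them; it lies below every other one, so it is also the closest to `I`.
-/

namespace SM

variable {m w : ℕ} {S : SM m w} {G H : Fin m → Fin w}

@[simp]
lemma symm_rho (S : SM m w) (G : Fin m → Fin w) (i : Fin m) :
    (S.mpref i).symm (S.rho G i) = G i :=
  Equiv.symm_apply_apply _ _

lemma Stable.exists_rho_eq_wrank_lt (hG : S.Stable G) {p : Fin m} {q : Fin w}
    (hpq : (S.mpref p).symm q < G p) :
    ∃ j, S.rho G j = q ∧ S.wrank q j < S.wrank q p := by
  have hnb := hG.2 p q
  simp only [Blocking, hpq, true_and, not_forall, not_lt] at hnb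
  obtain ⟨j, hj, hle⟩ := hnb
  have hjp : j ≠ p := by
    rintro rfl
    rw [← hj, symm_rho] at hpq
    exact lt_irrefl _ hpq
  exact ⟨j, hj, hle.lt_of_ne fun h => hjp (S.wrank_inj q h)⟩

/-- Otherwise the `G`-partner of `S.rho H i`, whom she prefers to `i`, would block `H` with her
(or be matched to her in `H` as well). -/
lemma Stable.exists_rho_eq_of_lt (hG : S.Stable G) (hH : S.Stable H) {i : Fin m}
    (hi : H i < G i) :
    ∃ k, S.rho G k = S.rho H i ∧ H k < G k := by
  set q := S.rho H i
  obtain ⟨k, hk, hw⟩ := hG.exists_rho_eq_wrank_lt (p := i) (q := q) (by simpa [q] using hi)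
  refine ⟨k, hk, lt_of_not_ge fun hGk => ?_⟩
  have hki : k ≠ i := by
    rintro rfl
    exact lt_irrefl _ hw
  have hkq : (S.mpref k).symm q = G k := by rw [← hk, symm_rho]
  rcases hGk.lt_or_eq with hlt | heq
  · obtain ⟨j, hj, hjk⟩ := hH.exists_rho_eq_wrank_lt (p := k) (q := q) (by rwa [hkq])
    obtain rfl : j = i := hH.1 hj
    exact lt_asymm hw hjk
  · exact hki (hH.1 ((congrArg (S.mpref k) heq.symm).trans hk))

/-- Counting: the improved men propose in `H` to women whose `G`-partners improved as well,
and both proposal maps are injective, so both sets of women coincide. -/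
lemma Stable.image_rho_improved_eq (hG : S.Stable G) (hH : S.Stable H) :
    ({i | H i < G i} : Finset (Fin m)).image (S.rho H) =
      ({i | H i < G i} : Finset (Fin m)).image (S.rho G) := by
  set X : Finset (Fin m) := {i | H i < G i}
  have hsub : X.image (S.rho H) ⊆ X.image (S.rho G) := by
    simp only [Finset.subset_iff, Finset.mem_image]
    rintro _ ⟨i, hi, rfl⟩
    obtain ⟨k, hk, hkX⟩ := hG.exists_rho_eq_of_lt hH (Finset.mem_filter.1 hi).2
    exact ⟨k, Finset.mem_filter.2 ⟨Finset.mem_univ _, hkX⟩, hk⟩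
  refine Finset.eq_of_subset_of_card_le hsub ?_
  rw [Finset.card_image_of_injective _ hH.1, Finset.card_image_of_injective _ hG.1]

lemma Stable.lt_of_rho_eq_of_lt (hG : S.Stable G) (hH : S.Stable H) {j j' : Fin m}
    (hj : H j < G j) (hjj' : S.rho H j' = S.rho G j) : H j' < G j' := by
  have hmem : S.rho G j ∈ ({i | H i < G i} : Finset (Fin m)).image (S.rho H) := by
    rw [hG.image_rho_improved_eq hH]
    exact Finset.mem_image_of_mem _ (Finset.mem_filter.2 ⟨Finset.mem_univ _, hj⟩)
  obtain ⟨i, hi, hij'⟩ := Finset.mem_image.1 hmem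
  obtain rfl : i = j' := hH.1 (hij'.trans hjj'.symm)
  exact (Finset.mem_filter.1 hi).2

/-- Whichever of `i` and `j` she prefers would block the other marriage with her. -/
lemma Stable.rho_ne_rho_of_le (hG : S.Stable G) (hH : S.Stable H) {i j : Fin m} (hij : i ≠ j)
    (hi : G i ≤ H i) (hj : H j ≤ G j) : S.rho G i ≠ S.rho H j := by
  intro hq
  have hi' : G i < H i := hi.lt_of_ne fun h =>
    hij (hH.1 (((congrArg (S.mpref i) h).symm.trans hq)))
  have hj' : H j < G j := hj.lt_of_ne fun h =>
    hij (hG.1 (hq.trans (congrArg (S.mpref j) h)))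
  obtain ⟨k, hk, hki⟩ := hH.exists_rho_eq_wrank_lt (p := i) (q := S.rho G i)
    (by simpa using hi')
  obtain ⟨l, hl, hlj⟩ := hG.exists_rho_eq_wrank_lt (p := j) (q := S.rho G i)
    (by rw [hq, symm_rho]; exact hj')
  obtain rfl : k = j := hH.1 (hk.trans hq)
  obtain rfl : l = i := hG.1 hl
  exact lt_asymm hki hlj

lemma rho_inf_of_le_left {i : Fin m} (hi : G i ≤ H i) : S.rho (G ⊓ H) i = S.rho G i := by
  simp [rho, inf_of_le_left hi]

lemma rho_inf_of_le_right {i : Fin m} (hi : H i ≤ G i) : S.rho (G ⊓ H) i = S.rho H i := by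
  simp [rho, inf_of_le_right hi]

lemma Stable.inf (hG : S.Stable G) (hH : S.Stable H) : S.Stable (G ⊓ H) := by
  constructor
  · intro i j hij
    by_contra hne
    rcases le_total (G i) (H i) with hi | hi <;> rcases le_total (G j) (H j) with hj | hj
    · rw [rho_inf_of_le_left hi, rho_inf_of_le_left hj] at hij
      exact hne (hG.1 hij)
    · rw [rho_inf_of_le_left hi, rho_inf_of_le_right hj] at hij
      exact hG.rho_ne_rho_of_le hH hne hi hj hij
    · rw [rho_inf_of_le_right hi, rho_inf_of_le_left hj] at hij
      exact hG.rho_ne_rho_of_le hH (Ne.symm hne) hj hi hij.symm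
    · rw [rho_inf_of_le_right hi, rho_inf_of_le_right hj] at hij
      exact hne (hH.1 hij)
  · rintro p q ⟨hpq, hq⟩
    obtain ⟨j, hj, hjp⟩ := hG.exists_rho_eq_wrank_lt (lt_of_lt_of_le hpq inf_le_left)
    obtain ⟨j', hj', hj'p⟩ := hH.exists_rho_eq_wrank_lt (lt_of_lt_of_le hpq inf_le_right)
    have hjH : H j < G j := lt_of_not_ge fun h =>
      (hq j ((rho_inf_of_le_left h).trans hj)).not_gt hjp
    have hj'G : G j' ≤ H j' := le_of_not_gt fun h =>
      (hq j' ((rho_inf_of_le_right h.le).trans hj')).not_gt hj'p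
    exact (hG.lt_of_rho_eq_of_lt hH hjH (hj'.trans hj.symm)).not_ge hj'G

lemma exists_least_stable_ge (S : SM m w) {I : Fin m → Fin w}
    (h : ∃ G, S.Stable G ∧ I ≤ G) :
    ∃ H, S.Stable H ∧ I ≤ H ∧ ∀ G, S.Stable G → I ≤ G → H ≤ G := by
  classical
  set T : Finset (Fin m → Fin w) := {G | S.Stable G ∧ I ≤ G}
  have hT : T.Nonempty := by simpa [T, Finset.filter_nonempty_iff] using h
  have hmem : S.Stable (T.inf' hT id) ∧ I ≤ T.inf' hT id :=
    Finset.inf'_mem {G | S.Stable G ∧ I ≤ G}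
      (fun _ hG _ hG' => ⟨hG.1.inf hG'.1, le_inf hG.2 hG'.2⟩) T hT id
      (fun G hG => (Finset.mem_filter.1 hG).2)
  exact ⟨T.inf' hT id, hmem.1, hmem.2, fun G hG hIG =>
    Finset.inf'_le id (Finset.mem_filter.2 ⟨Finset.mem_univ _, hG, hIG⟩)⟩

end SM

lemma pdist_le_pdist_of_le_of_le {m w : ℕ} {I H G : Fin m → Fin w} (hIH : I ≤ H)
    (hHG : H ≤ G) :
    pdist I H ≤ pdist I G := by
  refine Finset.sum_le_sum fun i _ => ?_
  rw [Nat.dist_eq_sub_of_le (Fin.le_iff_val_le_val.1 (hIH i)),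
    Nat.dist_eq_sub_of_le (Fin.le_iff_val_le_val.1 ((hIH i).trans (hHG i)))]
  exact Nat.sub_le_sub_right (Fin.le_iff_val_le_val.1 (hHG i)) _

/-- If some stable marriage lies above `I`, then there is a unique least stable marriage
`H ≥ I`, and `H` minimizes the `L¹` distance to `I` among all stable marriages `≥ I`. -/
theorem stmt10 {m w : ℕ} (S : SM m w) (I : Fin m → Fin w)
    (h : ∃ G' : Fin m → Fin w, S.Stable G' ∧ I ≤ G') :
    ∃ H : Fin m → Fin w, S.Stable H ∧ I ≤ H ∧
      (∀ G' : Fin m → Fin w, S.Stable G' → I ≤ G' → H ≤ G') ∧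
      (∀ G' : Fin m → Fin w, S.Stable G' → I ≤ G' → pdist I H ≤ pdist I G') ∧
      (∀ H' : Fin m → Fin w,
        (S.Stable H' ∧ I ≤ H' ∧ ∀ G' : Fin m → Fin w, S.Stable G' → I ≤ G' → H' ≤ G') →
        H' = H) := by
  obtain ⟨H, hH, hIH, hleast⟩ := S.exists_least_stable_ge h
  refine ⟨H, hH, hIH, hleast, fun G hG hIG => pdist_le_pdist_of_le_of_le hIH (hleast G hG hIG),
    fun H' hH' => le_antisymm (hH'.2.2 H hH hIH) (hleast H' hH'.1 hH'.2.1)⟩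
end

section
/- Satisfying a best blocking pair preserves the invariant of being above all stable marriages' lower bound: if G is a proposal vector, (p,q) is a blocking pair in G with q preferring p to all men proposing to q in any vector ≤ G, and H ≤ G is any proposal vector with H[p] > rank_p(q) (the rank of q in p's list), then (p,q) is a blocking pair for H; hence H is not stable. -/
open Finset

/-- Satisfying a best blocking pair preserves being above stable vectors: if `(p,q)` is a
blocking pair in `G` such that `q` prefers `p` to every other man who proposed to her in
any vector `≤ G`, and `H ≤ G` has `H p` strictly beyond the rank of `q` on `p`'s list,
then `(p,q)` is a blocking pair for `H`; hence `H` is not stable. -/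
theorem stmt14 {m w : ℕ} (S : SM m w) (G H : Fin m → Fin w) (p : Fin m) (q : Fin w)
    (hb : S.Blocking G p q)
    (hbest : ∀ j : Fin m, j ≠ p → (S.mpref j).symm q ≤ G j → S.wrank q p < S.wrank q j)
    (hHG : H ≤ G) (hHp : (S.mpref p).symm q < H p) :
    S.Blocking H p q ∧ ¬ S.Stable H := by
  have hblk : S.Blocking H p q := by
    refine ⟨hHp, fun j hj => ?_⟩
    have hsym : (S.mpref j).symm q = H j := by
      simp [SM.rho] at hj; simp [← hj]
    rcases eq_or_ne j p with rfl | hne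
    · exact absurd hsym (ne_of_lt hHp)
    · exact hbest j hne (hsym ▸ hHG j)
  exact ⟨hblk, fun hs => hs.2 p q hblk⟩
end

section
/- For a matching with proposal vector G that is not stable and satisfies numw(G) ≥ m: if G is not man-saturating then some previously-proposed woman is unmatched in G and her most-preferred past proposer forms a blocking pair with her; thus a best blocking pair always exists for some woman. -/
open Finset

/-- For an unstable `G` with `numw G ≥ m`: if `G` is not man-saturating then some
previously-proposed woman `q` is unmatched in `G` (receives no proposal in `G`) and her
most-preferred past proposer `p` forms a blocking pair with her; in particular
`rForbidden(G,p)` holds, so a best blocking pair exists. -/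
theorem stmt15 {m w : ℕ} (S : SM m w) (G : Fin m → Fin w)
    (hns : ¬ S.Stable G) (hn : m ≤ S.numw G) (hsat : ¬ S.Saturating G) :
    ∃ (p : Fin m) (q : Fin w),
      (∀ j : Fin m, S.rho G j ≠ q) ∧
      (S.mpref p).symm q < G p ∧
      (∀ j : Fin m, j ≠ p → (S.mpref j).symm q ≤ G j → S.wrank q p < S.wrank q j) ∧
      S.Blocking G p q ∧ S.RForbidden G p := by
  classical
  -- image of rho has card < m
  have himg : (Finset.univ.image (S.rho G)).card < m := by
    rcases lt_or_eq_of_le (Finset.card_image_le (s := Finset.univ) (f := S.rho G)) with h | h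
    · simpa using h
    · exfalso
      apply hsat
      have heq : (Finset.univ.image (S.rho G)).card = (Finset.univ : Finset (Fin m)).card := by
        simpa using h
      have := Finset.injOn_of_card_image_eq heq
      intro a b hab
      exact this (by simp) (by simp) hab
  set A := Finset.univ.filter fun q : Fin w => ∃ i : Fin m, (S.mpref i).symm q ≤ G i with hA
  have hcard : (Finset.univ.image (S.rho G)).card < A.card := lt_of_lt_of_le himg hn
  have hq : ∃ q ∈ A, q ∉ Finset.univ.image (S.rho G) := by
    by_contra h
    push_neg at h
    exact absurd (Finset.card_le_card h) (not_le.mpr hcard)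
  obtain ⟨q, hqA, hqim⟩ := hq
  have hunm : ∀ j : Fin m, S.rho G j ≠ q := by
    intro j hj
    exact hqim (Finset.mem_image.mpr ⟨j, Finset.mem_univ j, hj⟩)
  have hqA' : ∃ i : Fin m, (S.mpref i).symm q ≤ G i := (Finset.mem_filter.mp hqA).2
  set B := Finset.univ.filter fun i : Fin m => (S.mpref i).symm q ≤ G i with hB
  have hBne : B.Nonempty := by
    obtain ⟨i, hi⟩ := hqA'
    exact ⟨i, Finset.mem_filter.mpr ⟨Finset.mem_univ i, hi⟩⟩
  obtain ⟨p, hpB, hpmin⟩ := Finset.exists_min_image B (S.wrank q) hBne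
  have hpG : (S.mpref p).symm q ≤ G p := (Finset.mem_filter.mp hpB).2
  have hpslt : (S.mpref p).symm q < G p := by
    rcases lt_or_eq_of_le hpG with h | h
    · exact h
    · exfalso
      apply hunm p
      have : S.mpref p ((S.mpref p).symm q) = S.mpref p (G p) := by rw [h]
      simpa [SM.rho] using this.symm
  have hmin : ∀ j : Fin m, j ≠ p → (S.mpref j).symm q ≤ G j → S.wrank q p < S.wrank q j := by
    intro j hj hjG
    have hle := hpmin j (Finset.mem_filter.mpr ⟨Finset.mem_univ j, hjG⟩)
    rcases lt_or_eq_of_le hle with h | h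
    · exact h
    · exact absurd (S.wrank_inj q h) (Ne.symm hj)
  refine ⟨p, q, hunm, hpslt, hmin, ⟨hpslt, fun j hj => absurd hj (hunm j)⟩, q, hpslt, hmin⟩
end

section
/- In the Gale–Shapley setting generalized to algorithm α: if all men initially propose to their top choices (I = (1,1,...,1)), then a man i is forbidden in a reachable proposal vector G if and only if i is unmatched in G (his proposal is not the best proposal that his proposed woman has received in any vector ≤ G); i.e., the forbidden condition reduces to the standard GS rejection condition. -/
open Finset

/-- Proposal vectors reachable from the bottom vector (all men at their top choice) by
repeatedly advancing a forbidden man to his next choice. -/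
inductive Reachable {m w : ℕ} (S : SM m w) (hw : 0 < w) : (Fin m → Fin w) → Prop
  | base : Reachable S hw (fun _ => ⟨0, hw⟩)
  | step {G : Fin m → Fin w} {i : Fin m} (hG : Reachable S hw G)
      (hf : S.Forbidden G i) (hlt : (G i : ℕ) + 1 < w) :
      Reachable S hw (Function.update G i ⟨(G i : ℕ) + 1, hlt⟩)

/-- `i`'s proposal is the best proposal his proposed woman has received in any vector
`≤ G` (i.e. `curBest[ρ(G,i)] = i`). -/
def CurBest {m w : ℕ} (S : SM m w) (G : Fin m → Fin w) (i : Fin m) : Prop :=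
  ∀ j : Fin m, j ≠ i → (S.mpref j).symm (S.rho G i) ≤ G j →
    S.wrank (S.rho G i) i < S.wrank (S.rho G i) j

/-!
Let `q = ρ(G,i)` and let `b` be the man `q` likes best among all who have proposed to her in
some vector `≤ G`. If `i`'s proposal is not the best one, `b ≠ i`. Either `b` still proposes
to `q`, and he displaces `i` directly, or he has moved past `q`, and then `(b, q)` is a
blocking pair, since every current suitor of `q` has also proposed to her. Conversely, each
clause of `Forbidden` exhibits a man who has proposed to `q` and whom she prefers to `i`.
-/

namespace SM

variable {m w : ℕ} (S : SM m w)

theorem rho_eq_iff {G : Fin m → Fin w} {j : Fin m} {q : Fin w} :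
    S.rho G j = q ↔ (S.mpref j).symm q = G j := by
  rw [rho, ← Equiv.eq_symm_apply, eq_comm]

theorem wrank_lt_of_le_of_ne {q : Fin w} {a b : Fin m} (h : S.wrank q a ≤ S.wrank q b)
    (hne : a ≠ b) : S.wrank q a < S.wrank q b :=
  h.lt_of_ne fun h' => hne (S.wrank_inj q h')

/-- The men who propose to `q` in some vector `≤ G`. -/
def proposers (G : Fin m → Fin w) (q : Fin w) : Finset (Fin m) :=
  univ.filter fun k => (S.mpref k).symm q ≤ G k

theorem mem_proposers {G : Fin m → Fin w} {q : Fin w} {k : Fin m} :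
    k ∈ S.proposers G q ↔ (S.mpref k).symm q ≤ G k := by
  simp [proposers]

theorem mem_proposers_of_rho_eq {G : Fin m → Fin w} {q : Fin w} {k : Fin m}
    (h : S.rho G k = q) : k ∈ S.proposers G q :=
  S.mem_proposers.2 (S.rho_eq_iff.1 h).le

theorem not_curBest_of_forbidden {G : Fin m → Fin w} {i : Fin m} (h : S.Forbidden G i) :
    ¬ CurBest S G i := by
  intro hcb
  obtain ⟨j, hji, ⟨hρ, hlt⟩ | ⟨hlt, hbeats⟩⟩ := h
  · exact (hcb j hji (S.rho_eq_iff.1 hρ).le).asymm hlt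
  · exact (hcb j hji hlt.le).asymm (hbeats i rfl)

theorem forbidden_of_not_curBest {G : Fin m → Fin w} {i : Fin m} (h : ¬ CurBest S G i) :
    S.Forbidden G i := by
  set q := S.rho G i
  obtain ⟨j, hj, hji, hjq⟩ :
      ∃ j ∈ S.proposers G q, j ≠ i ∧ S.wrank q j < S.wrank q i := by
    simp only [CurBest, not_forall, not_lt] at h
    obtain ⟨j, hji, hj, hle⟩ := h
    exact ⟨j, S.mem_proposers.2 hj, hji, S.wrank_lt_of_le_of_ne hle hji⟩
  obtain ⟨b, hb, hbest⟩ := (S.proposers G q).exists_min_image (S.wrank q) ⟨j, hj⟩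
  have hbi : S.wrank q b < S.wrank q i := (hbest j hj).trans_lt hjq
  refine ⟨b, fun hb' => (hb' ▸ hbi).false, ?_⟩
  rcases (S.mem_proposers.1 hb).lt_or_eq with hlt | heq
  · refine Or.inr ⟨hlt, fun k hk => S.wrank_lt_of_le_of_ne (hbest k ?_) ?_⟩
    · exact S.mem_proposers_of_rho_eq hk
    · rintro rfl
      exact hlt.ne (S.rho_eq_iff.1 hk)
  · exact Or.inl ⟨S.rho_eq_iff.2 heq, hbi⟩

theorem forbidden_iff_not_curBest (G : Fin m → Fin w) (i : Fin m) :
    S.Forbidden G i ↔ ¬ CurBest S G i :=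
  ⟨S.not_curBest_of_forbidden, S.forbidden_of_not_curBest⟩

end SM

theorem stmt16_general {m w : ℕ} (S : SM m w) (G : Fin m → Fin w) :
    ∀ i : Fin m, S.Forbidden G i ↔ ¬ CurBest S G i :=
  S.forbidden_iff_not_curBest G

/-- For vectors reachable from the all-top-choices vector, the forbidden condition
reduces to the standard Gale–Shapley rejection condition: man `i` is forbidden in `G`
iff his proposal is not the best one his woman has received in any vector `≤ G`. -/
theorem stmt16 {m w : ℕ} (S : SM m w) (hw : 0 < w) (G : Fin m → Fin w)
    (hR : Reachable S hw G) :
    ∀ i : Fin m, S.Forbidden G i ↔ ¬ CurBest S G i :=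
  stmt16_general S G
end
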